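/- arXiv:1506.07291 — 5 statements merged into one kernel-verified Lean document; each statement's English description precedes it below -/
import Mathlib

section
/- Let (E, ℰ) be a measurable space, let K₁ and K₀ be finite measures on E, let M = (1/2)·(K₁ + K₀), and let f : E → ℝ be measurable with 0 ≤ f(z) ≤ 2 for all z, such that K₁ = M.withDensity f and K₀ = M.withDensity (2 − f). Fix p with 0 < p < 1 and define K̄_p = p·K₁ + (1−p)·K₀ and ψ_p(z) = f(z) / (p·f(z) + (1−p)·(2−f(z))). Then for every bounded measurable function g : E → ℝ, ∫ g(z)·(ψ_p(z) − 1) dK̄_p(z) = (1−p)·∫ g(z)·(f(z) − 1) d(K₁+K₀)(z). -/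
open MeasureTheory
open scoped ENNReal

/-- With `K₁`, `K₀`, `M`, `f`, `p`, `K̄_p`, `ψ_p` as in Statement 5, for every
bounded measurable `g : E → ℝ`,
`∫ g·(ψ_p − 1) dK̄_p = (1−p)·∫ g·(f − 1) d(K₁+K₀)`. -/
theorem stmt6 {E : Type*} [MeasurableSpace E]
    (K₁ K₀ : Measure E) [IsFiniteMeasure K₁] [IsFiniteMeasure K₀]
    (M : Measure E) (hM : M = (1/2 : ℝ≥0∞) • (K₁ + K₀))
    (f : E → ℝ) (hf : Measurable f) (hf0 : ∀ z, 0 ≤ f z) (hf2 : ∀ z, f z ≤ 2)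
    (hK₁ : K₁ = M.withDensity (fun z => ENNReal.ofReal (f z)))
    (hK₀ : K₀ = M.withDensity (fun z => ENNReal.ofReal (2 - f z)))
    (p : ℝ) (hp0 : 0 < p) (hp1 : p < 1)
    (Kbar : Measure E)
    (hKbar : Kbar = ENNReal.ofReal p • K₁ + ENNReal.ofReal (1 - p) • K₀)
    (ψ : E → ℝ)
    (hψ : ∀ z, ψ z = f z / (p * f z + (1 - p) * (2 - f z)))
    (g : E → ℝ) (hg : Measurable g) (hgb : ∃ C, ∀ z, |g z| ≤ C) :
    ∫ z, g z * (ψ z - 1) ∂Kbar = (1 - p) * ∫ z, g z * (f z - 1) ∂(K₁ + K₀) := by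
  set d : E → ℝ := fun z => p * f z + (1 - p) * (2 - f z) with hd_def
  have hdpos : ∀ z, 0 < d z := by
    intro z
    have h0 := hf0 z; have h2 := hf2 z
    simp only [hd_def]
    rcases eq_or_lt_of_le h0 with h|h
    · nlinarith
    · nlinarith [mul_pos hp0 h]
  have hdmeas : Measurable d := by
    fun_prop
  -- Kbar as withDensity
  have hKbar' : Kbar = M.withDensity (fun z => ENNReal.ofReal (d z)) := by
    rw [hKbar, hK₁, hK₀,
      ← withDensity_smul _ (by fun_prop : Measurable fun z => ENNReal.ofReal (f z)),
      ← withDensity_smul _ (by fun_prop : Measurable fun z => ENNReal.ofReal (2 - f z)),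
      ← withDensity_add_left (by fun_prop)]
    congr 1
    ext z
    simp only [Pi.add_apply, Pi.smul_apply, smul_eq_mul, hd_def]
    rw [← ENNReal.ofReal_mul hp0.le, ← ENNReal.ofReal_mul (by linarith),
      ← ENNReal.ofReal_add (by nlinarith [hf0 z]) (by nlinarith [hf2 z])]
  -- LHS
  have hLHS : ∫ z, g z * (ψ z - 1) ∂Kbar = ∫ z, d z * (g z * (ψ z - 1)) ∂M := by
    rw [hKbar']
    have : (fun z => ENNReal.ofReal (d z)) = fun z => ((Real.toNNReal (d z) : NNReal) : ℝ≥0∞) := rfl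
    rw [this, integral_withDensity_eq_integral_smul (by fun_prop) _]
    congr 1; ext z
    simp [NNReal.smul_def, Real.coe_toNNReal _ (hdpos z).le]
  -- pointwise identity
  have hpt : ∀ z, d z * (g z * (ψ z - 1)) = (1 - p) * (2 * (g z * (f z - 1))) := by
    intro z
    have hdz := (hdpos z).ne'
    rw [hψ z]
    simp only [hd_def] at hdz ⊢
    field_simp
    ring
  -- K₁ + K₀ = 2 • M
  have hKK : K₁ + K₀ = (2 : ℝ≥0∞) • M := by
    rw [hM, smul_smul, one_div, ENNReal.mul_inv_cancel (by norm_num) (by norm_num), one_smul]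
  rw [hLHS, integral_congr_ae (Filter.Eventually.of_forall hpt), hKK,
    integral_smul_measure, integral_const_mul, integral_const_mul]
  simp [ENNReal.toReal_ofNat]
end

section
/- Let K₁ and K₀ be finite measures on ℝ^d, let M = (1/2)·(K₁ + K₀), and let f : ℝ^d → ℝ be measurable with 0 ≤ f(z) ≤ 2, such that K₁ = M.withDensity f and K₀ = M.withDensity (2 − f). Let β₁, β₀, φ₁ ∈ ℝ^d, let Σ : ℝ^d → ℝ^d be a linear map, and let χ : ℝ^d → ℝ^d be a bounded measurable function. Assume the Girsanov relation Σ(φ₁) = β₁ − β₀ − ∫ (f(z) − 1)·χ(z) d(K₁+K₀)(z) (Bochner integral). Then for every p with 0 < p < 1, setting K̄_p = p·K₁ + (1−p)·K₀ and ψ_p(z) = f(z)/(p·f(z) + (1−p)·(2−f(z))), one has β₁ − (p·β₁ + (1−p)·β₀) = Σ((1−p)·φ₁) + ∫ (ψ_p(z) − 1)·χ(z) dK̄_p(z). -/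
open MeasureTheory
open scoped ENNReal

/-!
Both `K₁ + K₀ = 2 • M` and `K̄_p` have densities with respect to `M`, the latter being
`p f + (1 - p)(2 - f)`. Multiplying `ψ_p - 1` by this density gives `2 (1 - p)(f - 1)`,
so the `K̄_p`-integral is `(1 - p)` times the `(K₁ + K₀)`-integral in the Girsanov relation,
and the claim is that relation multiplied by `1 - p`.
-/

namespace MeasureTheory

variable {α : Type*} [MeasurableSpace α] {μ : Measure α}

theorem ofReal_smul_withDensity_add_ofReal_smul_withDensity {g h : α → ℝ} (hg : Measurable g)
    (hg0 : ∀ x, 0 ≤ g x) (hh0 : ∀ x, 0 ≤ h x) {a b : ℝ} (ha : 0 ≤ a) (hb : 0 ≤ b) :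
    ENNReal.ofReal a • μ.withDensity (fun x => ENNReal.ofReal (g x))
        + ENNReal.ofReal b • μ.withDensity (fun x => ENNReal.ofReal (h x))
      = μ.withDensity (fun x => ENNReal.ofReal (a * g x + b * h x)) := by
  have hdens : (fun x => ENNReal.ofReal (a * g x + b * h x))
      = ENNReal.ofReal a • (fun x => ENNReal.ofReal (g x))
        + ENNReal.ofReal b • (fun x => ENNReal.ofReal (h x)) := by
    funext x
    simp only [Pi.add_apply, Pi.smul_apply, smul_eq_mul]
    rw [ENNReal.ofReal_add (mul_nonneg ha (hg0 x)) (mul_nonneg hb (hh0 x)),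
      ENNReal.ofReal_mul ha, ENNReal.ofReal_mul hb]
  rw [hdens, withDensity_add_left (hg.ennreal_ofReal.const_smul _),
    withDensity_smul' _ _ ENNReal.ofReal_ne_top, withDensity_smul' _ _ ENNReal.ofReal_ne_top]

theorem integral_withDensity_ofReal {E : Type*} [NormedAddCommGroup E] [NormedSpace ℝ E]
    {g : α → ℝ} (hg : Measurable g) (hg0 : 0 ≤ᵐ[μ] g) (F : α → E) :
    ∫ x, F x ∂μ.withDensity (fun x => ENNReal.ofReal (g x)) = ∫ x, g x • F x ∂μ := by
  rw [integral_withDensity_eq_integral_toReal_smul hg.ennreal_ofReal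
    (Filter.Eventually.of_forall fun _ => ENNReal.ofReal_lt_top)]
  refine integral_congr_ae ?_
  filter_upwards [hg0] with x hx
  rw [ENNReal.toReal_ofReal hx]

end MeasureTheory

theorem mixture_density_pos {p x : ℝ} (hp0 : 0 < p) (hp1 : p < 1) (hx0 : 0 ≤ x) (hx2 : x ≤ 2) :
    0 < p * x + (1 - p) * (2 - x) := by
  nlinarith [mul_nonneg hp0.le hx0, mul_nonneg (sub_pos.2 hp1).le (sub_nonneg.2 hx2)]

theorem mixture_density_mul_likelihood_sub_one {p x : ℝ}
    (hden : p * x + (1 - p) * (2 - x) ≠ 0) :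
    (p * x + (1 - p) * (2 - x)) * (x / (p * x + (1 - p) * (2 - x)) - 1)
      = 2 * (1 - p) * (x - 1) := by
  rw [mul_sub, mul_div_cancel₀ _ hden]
  ring

theorem stmt7_general {d : ℕ}
    (K₁ K₀ : Measure (Fin d → ℝ))
    (M : Measure (Fin d → ℝ)) (hM : M = (1/2 : ℝ≥0∞) • (K₁ + K₀))
    (f : (Fin d → ℝ) → ℝ) (hf : Measurable f)
    (hf0 : ∀ z, 0 ≤ f z) (hf2 : ∀ z, f z ≤ 2)
    (hK₁ : K₁ = M.withDensity (fun z => ENNReal.ofReal (f z)))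
    (hK₀ : K₀ = M.withDensity (fun z => ENNReal.ofReal (2 - f z)))
    (β₁ β₀ φ₁ : Fin d → ℝ) (Sig : (Fin d → ℝ) →ₗ[ℝ] (Fin d → ℝ))
    (χ : (Fin d → ℝ) → (Fin d → ℝ))
    (hGirsanov : Sig φ₁ = β₁ - β₀ - ∫ z, (f z - 1) • χ z ∂(K₁ + K₀))
    (p : ℝ) (hp0 : 0 < p) (hp1 : p < 1)
    (Kbar : Measure (Fin d → ℝ))
    (hKbar : Kbar = ENNReal.ofReal p • K₁ + ENNReal.ofReal (1 - p) • K₀)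
    (ψ : (Fin d → ℝ) → ℝ)
    (hψ : ∀ z, ψ z = f z / (p * f z + (1 - p) * (2 - f z))) :
    β₁ - (p • β₁ + (1 - p) • β₀) = Sig ((1 - p) • φ₁) + ∫ z, (ψ z - 1) • χ z ∂Kbar := by
  set den : (Fin d → ℝ) → ℝ := fun z => p * f z + (1 - p) * (2 - f z)
  have hden_pos (z : Fin d → ℝ) : 0 < den z := mixture_density_pos hp0 hp1 (hf0 z) (hf2 z)
  have hKbar_dens : Kbar = M.withDensity (fun z => ENNReal.ofReal (den z)) := by
    rw [hKbar, hK₁, hK₀]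
    exact ofReal_smul_withDensity_add_ofReal_smul_withDensity hf hf0
      (fun z => sub_nonneg.2 (hf2 z)) hp0.le (sub_pos.2 hp1).le
  have hKsum : K₁ + K₀ = (2 : ℝ≥0∞) • M := by
    rw [hM, smul_smul, one_div, ENNReal.mul_inv_cancel two_ne_zero ENNReal.ofNat_ne_top, one_smul]
  have hIntKbar : ∫ z, (ψ z - 1) • χ z ∂Kbar = (2 * (1 - p)) • ∫ z, (f z - 1) • χ z ∂M := by
    rw [hKbar_dens, integral_withDensity_ofReal (by fun_prop)
      (Filter.Eventually.of_forall fun z => (hden_pos z).le), ← integral_smul]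
    congr 1 with z
    rw [smul_smul, smul_smul, hψ, mixture_density_mul_likelihood_sub_one (hden_pos z).ne']
  have hIntSum : ∫ z, (f z - 1) • χ z ∂(K₁ + K₀) = (2 : ℝ) • ∫ z, (f z - 1) • χ z ∂M := by
    rw [hKsum, integral_smul_measure, ENNReal.toReal_ofNat]
  rw [map_smul, hGirsanov, hIntKbar, hIntSum]
  module

/-- Let `K₁`, `K₀` be finite measures on `ℝ^d`, `M = (1/2)·(K₁+K₀)`,
`f : ℝ^d → ℝ` measurable with `0 ≤ f ≤ 2`, `K₁ = M.withDensity f`,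
`K₀ = M.withDensity (2 − f)`. Let `β₁, β₀, φ₁ ∈ ℝ^d`, `Σ` a linear map `ℝ^d → ℝ^d`, and
`χ : ℝ^d → ℝ^d` bounded measurable. Assume the Girsanov relation
`Σ φ₁ = β₁ − β₀ − ∫ (f z − 1) • χ z d(K₁+K₀)`. Then for every `p ∈ (0,1)`, with
`K̄_p = p·K₁ + (1−p)·K₀` and `ψ_p z = f z/(p·f z + (1−p)·(2−f z))`,
`β₁ − (p·β₁ + (1−p)·β₀) = Σ ((1−p)·φ₁) + ∫ (ψ_p z − 1) • χ z dK̄_p`. -/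
theorem stmt7 {d : ℕ}
    (K₁ K₀ : Measure (Fin d → ℝ)) [IsFiniteMeasure K₁] [IsFiniteMeasure K₀]
    (M : Measure (Fin d → ℝ)) (hM : M = (1/2 : ℝ≥0∞) • (K₁ + K₀))
    (f : (Fin d → ℝ) → ℝ) (hf : Measurable f)
    (hf0 : ∀ z, 0 ≤ f z) (hf2 : ∀ z, f z ≤ 2)
    (hK₁ : K₁ = M.withDensity (fun z => ENNReal.ofReal (f z)))
    (hK₀ : K₀ = M.withDensity (fun z => ENNReal.ofReal (2 - f z)))
    (β₁ β₀ φ₁ : Fin d → ℝ) (Sig : (Fin d → ℝ) →ₗ[ℝ] (Fin d → ℝ))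
    (χ : (Fin d → ℝ) → (Fin d → ℝ)) (hχ : Measurable χ) (hχb : ∃ C, ∀ z, ‖χ z‖ ≤ C)
    (hGirsanov : Sig φ₁ = β₁ - β₀ - ∫ z, (f z - 1) • χ z ∂(K₁ + K₀))
    (p : ℝ) (hp0 : 0 < p) (hp1 : p < 1)
    (Kbar : Measure (Fin d → ℝ))
    (hKbar : Kbar = ENNReal.ofReal p • K₁ + ENNReal.ofReal (1 - p) • K₀)
    (ψ : (Fin d → ℝ) → ℝ)
    (hψ : ∀ z, ψ z = f z / (p * f z + (1 - p) * (2 - f z))) :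
    β₁ - (p • β₁ + (1 - p) • β₀) = Sig ((1 - p) • φ₁) + ∫ z, (ψ z - 1) • χ z ∂Kbar :=
  stmt7_general K₁ K₀ M hM f hf hf0 hf2 hK₁ hK₀ β₁ β₀ φ₁ Sig χ hGirsanov p hp0 hp1 Kbar hKbar ψ hψ
end

section
/- Let (E, ℰ) be a measurable space, let K₁ and K₀ be finite measures on E, let M = (1/2)·(K₁ + K₀), and let f : E → ℝ be measurable with 0 ≤ f(z) ≤ 2, such that K₁ = M.withDensity f and K₀ = M.withDensity (2 − f). Fix p with 0 < p < 1, let K̄_p = p·K₁ + (1−p)·K₀ and ψ_p(z) = f(z)/(p·f(z) + (1−p)·(2−f(z))). Then the following chain of inequalities holds: ∫ (ψ_p·log(ψ_p) − ψ_p + 1) dK̄_p ≤ ∫ (ψ_p − 1)² dK̄_p ≤ (1/p²)·∫ (f − 1)² dK̄_p ≤ (2/p²)·∫ (1 − √(f·(2−f))) dK̄_p ≤ (4/p²)·∫ (1 − √(f·(2−f))) dM. (All integrands are nonnegative and bounded, with the convention 0·log(0) = 0.) -/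
open MeasureTheory
open scoped ENNReal

private lemma integrable_of_bdd {E : Type*} [MeasurableSpace E] {μ : Measure E}
    [IsFiniteMeasure μ] {g : E → ℝ} (hm : Measurable g) (C : ℝ)
    (h : ∀ z, |g z| ≤ C) : Integrable g μ :=
  Integrable.mono' (integrable_const C) hm.aestronglyMeasurable
    (Filter.Eventually.of_forall fun z => by simpa using h z)

private lemma xlogx_le {x : ℝ} (hx : 0 ≤ x) :
    x * Real.log x - x + 1 ≤ (x - 1) ^ 2 := by
  rcases eq_or_lt_of_le hx with h | h
  · simp [← h]
  · have := Real.log_le_sub_one_of_pos h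
    nlinarith [mul_le_mul_of_nonneg_left this hx]

private lemma xlogx_nonneg {x : ℝ} (hx : 0 ≤ x) :
    0 ≤ x * Real.log x - x + 1 := by
  rcases eq_or_lt_of_le hx with h | h
  · simp [← h]
  · have h1 : Real.log (1 / x) ≤ 1 / x - 1 :=
      Real.log_le_sub_one_of_pos (by positivity)
    rw [Real.log_div one_ne_zero h.ne', Real.log_one] at h1
    have := mul_le_mul_of_nonneg_left h1 hx
    have hx1 : x * (1 / x) = 1 := by field_simp
    nlinarith

/-- With `K₁`, `K₀`, `M`, `f`, `p`, `K̄_p`, `ψ_p` as in Statement 5, the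
following chain of inequalities holds:
`∫ (ψ·log ψ − ψ + 1) dK̄_p ≤ ∫ (ψ−1)² dK̄_p ≤ (1/p²)·∫ (f−1)² dK̄_p
  ≤ (2/p²)·∫ (1 − √(f(2−f))) dK̄_p ≤ (4/p²)·∫ (1 − √(f(2−f))) dM`
(with the convention `0·log 0 = 0`, automatic since `Real.log 0 = 0`). -/
theorem stmt8 {E : Type*} [MeasurableSpace E]
    (K₁ K₀ : Measure E) [IsFiniteMeasure K₁] [IsFiniteMeasure K₀]
    (M : Measure E) (hM : M = (1/2 : ℝ≥0∞) • (K₁ + K₀))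
    (f : E → ℝ) (hf : Measurable f) (hf0 : ∀ z, 0 ≤ f z) (hf2 : ∀ z, f z ≤ 2)
    (hK₁ : K₁ = M.withDensity (fun z => ENNReal.ofReal (f z)))
    (hK₀ : K₀ = M.withDensity (fun z => ENNReal.ofReal (2 - f z)))
    (p : ℝ) (hp0 : 0 < p) (hp1 : p < 1)
    (Kbar : Measure E)
    (hKbar : Kbar = ENNReal.ofReal p • K₁ + ENNReal.ofReal (1 - p) • K₀)
    (ψ : E → ℝ)
    (hψ : ∀ z, ψ z = f z / (p * f z + (1 - p) * (2 - f z))) :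
    (∫ z, (ψ z * Real.log (ψ z) - ψ z + 1) ∂Kbar ≤ ∫ z, (ψ z - 1) ^ 2 ∂Kbar) ∧
    (∫ z, (ψ z - 1) ^ 2 ∂Kbar ≤ (1 / p ^ 2) * ∫ z, (f z - 1) ^ 2 ∂Kbar) ∧
    ((1 / p ^ 2) * ∫ z, (f z - 1) ^ 2 ∂Kbar
      ≤ (2 / p ^ 2) * ∫ z, (1 - Real.sqrt (f z * (2 - f z))) ∂Kbar) ∧
    ((2 / p ^ 2) * ∫ z, (1 - Real.sqrt (f z * (2 - f z))) ∂Kbar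
      ≤ (4 / p ^ 2) * ∫ z, (1 - Real.sqrt (f z * (2 - f z))) ∂M) := by
  have hp1' : 0 < 1 - p := by linarith
  -- denominator
  set c : E → ℝ := fun z => p * f z + (1 - p) * (2 - f z) with hc
  have hclb : ∀ z, 2 * (p * (1 - p)) ≤ c z := fun z => by
    have h1 := hf0 z; have h2 := hf2 z
    simp only [hc]
    nlinarith [mul_nonneg (mul_nonneg hp0.le hp0.le) h1,
      mul_nonneg (mul_nonneg hp1'.le hp1'.le) (by linarith : (0:ℝ) ≤ 2 - f z)]
  have hcpos : ∀ z, 0 < c z := fun z =>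
    lt_of_lt_of_le (by positivity) (hclb z)
  -- ψ bounds
  have hψ0 : ∀ z, 0 ≤ ψ z := fun z => by
    rw [hψ]; exact div_nonneg (hf0 z) (hcpos z).le
  have hψub : ∀ z, ψ z ≤ 1 / p := fun z => by
    rw [hψ]
    rw [div_le_div_iff₀ (hcpos z) hp0]
    have h1 := hf0 z; have h2 := hf2 z
    have hcz : c z = p * f z + (1 - p) * (2 - f z) := rfl
    nlinarith [mul_nonneg hp1'.le (by linarith : (0:ℝ) ≤ 2 - f z)]
  -- measurability
  have hcm : Measurable c := by
    apply Measurable.add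
    · exact measurable_const.mul hf
    · exact measurable_const.mul (measurable_const.sub hf)
  have hψm : Measurable ψ := by
    have : ψ = fun z => f z / c z := funext hψ
    rw [this]; exact hf.div hcm
  have hgm : Measurable (fun z => 1 - Real.sqrt (f z * (2 - f z))) :=
    measurable_const.sub ((hf.mul (measurable_const.sub hf)).sqrt)
  -- bounds on g
  have hg0 : ∀ z, 0 ≤ 1 - Real.sqrt (f z * (2 - f z)) := fun z => by
    have h1 := hf0 z; have h2 := hf2 z
    have : Real.sqrt (f z * (2 - f z)) ≤ 1 := by
      rw [show (1:ℝ) = Real.sqrt 1 by simp]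
      exact Real.sqrt_le_sqrt (by nlinarith [sq_nonneg (f z - 1)])
    linarith
  have hg1 : ∀ z, 1 - Real.sqrt (f z * (2 - f z)) ≤ 1 := fun z => by
    have := Real.sqrt_nonneg (f z * (2 - f z)); linarith
  -- Kbar finite
  haveI hKbarFin : IsFiniteMeasure Kbar := by
    rw [hKbar]
    refine ⟨?_⟩
    simp only [Measure.add_apply, Measure.smul_apply, smul_eq_mul]
    exact ENNReal.add_lt_top.2 ⟨ENNReal.mul_lt_top ENNReal.ofReal_lt_top
      (measure_lt_top _ _), ENNReal.mul_lt_top ENNReal.ofReal_lt_top (measure_lt_top _ _)⟩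
  -- integrabilities over Kbar
  have hint2 : Integrable (fun z => (ψ z - 1) ^ 2) Kbar := by
    refine integrable_of_bdd ((hψm.sub measurable_const).pow_const 2) ((1/p + 1)^2) fun z => ?_
    rw [abs_of_nonneg (sq_nonneg _)]
    have h1 := hψ0 z; have h2 := hψub z
    nlinarith [one_div_pos.2 hp0]
  have hint1 : Integrable (fun z => ψ z * Real.log (ψ z) - ψ z + 1) Kbar := by
    refine Integrable.mono' hint2
      (((hψm.mul hψm.log).sub hψm).add measurable_const).aestronglyMeasurable
      (Filter.Eventually.of_forall fun z => ?_)
    rw [Real.norm_eq_abs, abs_of_nonneg (xlogx_nonneg (hψ0 z))]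
    exact xlogx_le (hψ0 z)
  have hintf : Integrable (fun z => (1 / p ^ 2) * (f z - 1) ^ 2) Kbar := by
    refine integrable_of_bdd (measurable_const.mul ((hf.sub measurable_const).pow_const 2))
      (1 / p ^ 2) fun z => ?_
    have h1 := hf0 z; have h2 := hf2 z
    rw [abs_of_nonneg (by positivity)]
    have hq : (f z - 1) ^ 2 ≤ 1 := by nlinarith
    have : (0:ℝ) < 1 / p ^ 2 := by positivity
    nlinarith
  have hintf2 : Integrable (fun z => (f z - 1) ^ 2) Kbar := by
    refine integrable_of_bdd ((hf.sub measurable_const).pow_const 2) 1 fun z => ?_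
    have h1 := hf0 z; have h2 := hf2 z
    rw [abs_of_nonneg (sq_nonneg _)]; nlinarith
  have hintg : ∀ (μ : Measure E) [IsFiniteMeasure μ],
      Integrable (fun z => 1 - Real.sqrt (f z * (2 - f z))) μ := fun μ _ =>
    integrable_of_bdd hgm 1 fun z => by
      rw [abs_of_nonneg (hg0 z)]; exact hg1 z
  -- part 1
  have P1 : ∫ z, (ψ z * Real.log (ψ z) - ψ z + 1) ∂Kbar ≤ ∫ z, (ψ z - 1) ^ 2 ∂Kbar :=
    integral_mono hint1 hint2 fun z => xlogx_le (hψ0 z)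
  -- part 2
  have P2 : ∫ z, (ψ z - 1) ^ 2 ∂Kbar ≤ (1 / p ^ 2) * ∫ z, (f z - 1) ^ 2 ∂Kbar := by
    have key : ∀ z, (ψ z - 1) ^ 2 ≤ (1 / p ^ 2) * (f z - 1) ^ 2 := fun z => by
      have hcz := hcpos z
      have hlb := hclb z
      have hcz' : c z = p * f z + (1 - p) * (2 - f z) := rfl
      have hdiff : ψ z - 1 = 2 * (1 - p) * (f z - 1) / c z := by
        rw [hψ, ← hcz']; field_simp; ring
      rw [hdiff, div_pow, div_le_iff₀ (by positivity)]
      have hsq : (2 * (p * (1 - p))) ^ 2 ≤ (c z) ^ 2 := by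
        apply sq_le_sq' <;> nlinarith
      have h2 : (0:ℝ) ≤ (f z - 1) ^ 2 := sq_nonneg _
      have hpp : (0:ℝ) < p ^ 2 := by positivity
      have hid : 1 / p ^ 2 * (f z - 1) ^ 2 * c z ^ 2 - (2 * (1 - p) * (f z - 1)) ^ 2
          = ((f z - 1) ^ 2 * (c z ^ 2 - (2 * (p * (1 - p))) ^ 2)) / p ^ 2 := by
        field_simp
      have hnn : 0 ≤ ((f z - 1) ^ 2 * (c z ^ 2 - (2 * (p * (1 - p))) ^ 2)) / p ^ 2 :=
        div_nonneg (mul_nonneg h2 (by linarith)) hpp.le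
      linarith
    calc ∫ z, (ψ z - 1) ^ 2 ∂Kbar ≤ ∫ z, (1 / p ^ 2) * (f z - 1) ^ 2 ∂Kbar :=
          integral_mono hint2 hintf key
      _ = (1 / p ^ 2) * ∫ z, (f z - 1) ^ 2 ∂Kbar := integral_const_mul _ _
  -- part 3
  have P3 : (1 / p ^ 2) * ∫ z, (f z - 1) ^ 2 ∂Kbar
      ≤ (2 / p ^ 2) * ∫ z, (1 - Real.sqrt (f z * (2 - f z))) ∂Kbar := by
    have key : ∀ z, (f z - 1) ^ 2 ≤ 2 * (1 - Real.sqrt (f z * (2 - f z))) := fun z => by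
      have h1 := hf0 z; have h2 := hf2 z
      have hnn : (0:ℝ) ≤ f z * (2 - f z) := by nlinarith
      have hs := Real.sq_sqrt hnn
      have hs0 := Real.sqrt_nonneg (f z * (2 - f z))
      nlinarith [sq_nonneg (1 - Real.sqrt (f z * (2 - f z)))]
    have h := integral_mono hintf2 ((hintg Kbar).const_mul 2) key
    rw [integral_const_mul] at h
    have hpp : (0:ℝ) ≤ 1 / p ^ 2 := by positivity
    calc (1 / p ^ 2) * ∫ z, (f z - 1) ^ 2 ∂Kbar
        ≤ (1 / p ^ 2) * (2 * ∫ z, (1 - Real.sqrt (f z * (2 - f z))) ∂Kbar) :=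
          mul_le_mul_of_nonneg_left h hpp
      _ = (2 / p ^ 2) * ∫ z, (1 - Real.sqrt (f z * (2 - f z))) ∂Kbar := by ring
  -- part 4
  have P4 : (2 / p ^ 2) * ∫ z, (1 - Real.sqrt (f z * (2 - f z))) ∂Kbar
      ≤ (4 / p ^ 2) * ∫ z, (1 - Real.sqrt (f z * (2 - f z))) ∂M := by
    have hI1 : Integrable (fun z => 1 - Real.sqrt (f z * (2 - f z))) K₁ := hintg K₁
    have hI0 : Integrable (fun z => 1 - Real.sqrt (f z * (2 - f z))) K₀ := hintg K₀
    have e1 : ∫ z, (1 - Real.sqrt (f z * (2 - f z))) ∂Kbar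
        = p * ∫ z, (1 - Real.sqrt (f z * (2 - f z))) ∂K₁
          + (1 - p) * ∫ z, (1 - Real.sqrt (f z * (2 - f z))) ∂K₀ := by
      rw [hKbar, integral_add_measure (hI1.smul_measure ENNReal.ofReal_lt_top.ne)
        (hI0.smul_measure ENNReal.ofReal_lt_top.ne), integral_smul_measure,
        integral_smul_measure, ENNReal.toReal_ofReal hp0.le,
        ENNReal.toReal_ofReal hp1'.le]
      simp [smul_eq_mul]
    have e2 : ∫ z, (1 - Real.sqrt (f z * (2 - f z))) ∂M
        = (1/2) * (∫ z, (1 - Real.sqrt (f z * (2 - f z))) ∂K₁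
          + ∫ z, (1 - Real.sqrt (f z * (2 - f z))) ∂K₀) := by
      rw [hM, integral_smul_measure, integral_add_measure hI1 hI0]
      norm_num
    have hn1 : 0 ≤ ∫ z, (1 - Real.sqrt (f z * (2 - f z))) ∂K₁ :=
      integral_nonneg fun z => hg0 z
    have hn0 : 0 ≤ ∫ z, (1 - Real.sqrt (f z * (2 - f z))) ∂K₀ :=
      integral_nonneg fun z => hg0 z
    rw [e1, e2]
    have hpp : (0:ℝ) < 1 / p ^ 2 := by positivity
    have : p * ∫ z, (1 - Real.sqrt (f z * (2 - f z))) ∂K₁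
          + (1 - p) * ∫ z, (1 - Real.sqrt (f z * (2 - f z))) ∂K₀
        ≤ 2 * ((1/2) * (∫ z, (1 - Real.sqrt (f z * (2 - f z))) ∂K₁
          + ∫ z, (1 - Real.sqrt (f z * (2 - f z))) ∂K₀)) := by nlinarith
    calc (2 / p ^ 2) * _ ≤ (2 / p ^ 2) * (2 * ((1/2) * (_ + _))) :=
          mul_le_mul_of_nonneg_left this (by positivity)
      _ = (4 / p ^ 2) * ((1/2) * (_ + _)) := by ring
  exact ⟨P1, P2, P3, P4⟩
end

section
/- Let K₁ and K₀ be finite measures on ℝ^d, let M = (1/2)·(K₁ + K₀), and let f : ℝ^d → ℝ be measurable with 0 ≤ f(z) ≤ 2, such that K₁ = M.withDensity f and K₀ = M.withDensity (2 − f). Fix p with 0 < p < 1, set K̄_p = p·K₁ + (1−p)·K₀ and j_p(z) = p·f(z)/(p·f(z) + (1−p)·(2−f(z))) − p. Then ∫ min( j_p(z)² + ‖z‖², 1 ) dK̄_p(z) ≤ 4·∫ (1 − √(f(z)·(2−f(z)))) dK̄_p(z) + 2·∫ min(‖z‖², 1) dK̄_p(z). -/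
open MeasureTheory
open scoped ENNReal

/-!
The estimate is pointwise. Writing `D = p t + (1 - p)(2 - t) = 2p(1 - p) + p² t + (1 - p)² (2 - t)`,
the belief jump is `j = 2p(1 - p)(t - 1) / D`, so `|j| ≤ |t - 1|`; and with `s = √(t (2 - t))` one has
`(t - 1)² = 1 - s² = (1 - s)(1 + s) ≤ 2 (1 - s)`. Since `min (a + b) 1 ≤ a + min b 1` for `a ≥ 0`,
integrating against the finite measure `K̄_p` gives the claim.
-/

lemma sq_sub_one_le_two_mul_one_sub_sqrt {t : ℝ} (ht0 : 0 ≤ t) (ht2 : t ≤ 2) :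
    (t - 1) ^ 2 ≤ 2 * (1 - Real.sqrt (t * (2 - t))) := by
  have hs : Real.sqrt (t * (2 - t)) ^ 2 = t * (2 - t) := Real.sq_sqrt (by nlinarith)
  nlinarith [Real.sqrt_nonneg (t * (2 - t)), sq_nonneg (Real.sqrt (t * (2 - t)) - 1)]

lemma sq_belief_jump_le {p t : ℝ} (hp0 : 0 < p) (hp1 : p < 1) (ht0 : 0 ≤ t) (ht2 : t ≤ 2) :
    (p * t / (p * t + (1 - p) * (2 - t)) - p) ^ 2 ≤ (t - 1) ^ 2 := by
  set D := p * t + (1 - p) * (2 - t)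
  have hpq : 0 < 2 * p * (1 - p) := by nlinarith
  have hD : 2 * p * (1 - p) ≤ D := by
    nlinarith [mul_nonneg ht0 (sq_nonneg p), mul_nonneg (sub_nonneg.2 ht2) (sq_nonneg (1 - p))]
  have hjump : p * t / D - p = 2 * p * (1 - p) / D * (t - 1) := by
    have hD0 : D ≠ 0 := (hpq.trans_le hD).ne'
    rw [div_sub' hD0, div_mul_eq_mul_div]
    congr 1
    ring
  have hratio : 2 * p * (1 - p) / D ≤ 1 := (div_le_one (hpq.trans_le hD)).2 hD
  rw [hjump, mul_pow]
  exact mul_le_of_le_one_left (sq_nonneg _) (pow_le_one₀ (by positivity) hratio)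

lemma min_add_le_add_min {α : Type*} [AddCommMonoid α] [LinearOrder α] [IsOrderedAddMonoid α]
    {a : α} (ha : 0 ≤ a) (b c : α) : min (a + b) c ≤ a + min b c :=
  (min_add_add_left a b c).symm ▸ min_le_min le_rfl (le_add_of_nonneg_left ha)

lemma one_sub_sqrt_mul_two_sub_mem_Icc (t : ℝ) :
    1 - Real.sqrt (t * (2 - t)) ∈ Set.Icc 0 1 := by
  have hle : Real.sqrt (t * (2 - t)) ≤ 1 :=
    Real.sqrt_le_one.2 (by nlinarith [sq_nonneg (t - 1)])
  exact ⟨sub_nonneg.2 hle, sub_le_self _ (Real.sqrt_nonneg _)⟩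

lemma min_sq_belief_jump_add_le {p t r : ℝ} (hp0 : 0 < p) (hp1 : p < 1) (ht0 : 0 ≤ t)
    (ht2 : t ≤ 2) (hr : 0 ≤ r) :
    min ((p * t / (p * t + (1 - p) * (2 - t)) - p) ^ 2 + r) 1
      ≤ 4 * (1 - Real.sqrt (t * (2 - t))) + 2 * min r 1 := by
  have hjump := (sq_belief_jump_le hp0 hp1 ht0 ht2).trans
    (sq_sub_one_le_two_mul_one_sub_sqrt ht0 ht2)
  have hhell := (one_sub_sqrt_mul_two_sub_mem_Icc t).1
  have hmin : 0 ≤ min r 1 := le_min hr zero_le_one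
  linarith [min_add_le_add_min (sq_nonneg (p * t / (p * t + (1 - p) * (2 - t)) - p)) r 1]

theorem stmt9_general {d : ℕ}
    (K₁ K₀ : Measure (Fin d → ℝ)) [IsFiniteMeasure K₁] [IsFiniteMeasure K₀]
    (f : (Fin d → ℝ) → ℝ) (hf : Measurable f)
    (hf0 : ∀ z, 0 ≤ f z) (hf2 : ∀ z, f z ≤ 2)
    (p : ℝ) (hp0 : 0 < p) (hp1 : p < 1)
    (Kbar : Measure (Fin d → ℝ))
    (hKbar : Kbar = ENNReal.ofReal p • K₁ + ENNReal.ofReal (1 - p) • K₀)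
    (j : (Fin d → ℝ) → ℝ)
    (hj : ∀ z, j z = p * f z / (p * f z + (1 - p) * (2 - f z)) - p) :
    ∫ z, min (j z ^ 2 + ‖z‖ ^ 2) 1 ∂Kbar
      ≤ 4 * ∫ z, (1 - Real.sqrt (f z * (2 - f z))) ∂Kbar
        + 2 * ∫ z, min (‖z‖ ^ 2) 1 ∂Kbar := by
  have hpointwise (z) : min (j z ^ 2 + ‖z‖ ^ 2) 1
      ≤ 4 * (1 - Real.sqrt (f z * (2 - f z))) + 2 * min (‖z‖ ^ 2) 1 := by
    rw [hj z]
    exact min_sq_belief_jump_add_le hp0 hp1 (hf0 z) (hf2 z) (by positivity)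
  have : IsFiniteMeasure Kbar := by
    have := K₁.smul_finite (c := ENNReal.ofReal p) ENNReal.ofReal_ne_top
    have := K₀.smul_finite (c := ENNReal.ofReal (1 - p)) ENNReal.ofReal_ne_top
    rw [hKbar]
    infer_instance
  have hhell : Integrable (fun z => 1 - Real.sqrt (f z * (2 - f z))) Kbar := by
    refine .of_bound (by fun_prop) 1 (ae_of_all _ fun z => ?_)
    obtain ⟨h0, h1⟩ := one_sub_sqrt_mul_two_sub_mem_Icc (f z)
    rwa [Real.norm_of_nonneg h0]
  have hnorm : Integrable (fun z => min (‖z‖ ^ 2) 1) Kbar := by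
    refine .of_bound (by fun_prop) 1 (ae_of_all _ fun z => ?_)
    rw [Real.norm_of_nonneg (le_min (by positivity) zero_le_one)]
    exact min_le_right _ _
  calc ∫ z, min (j z ^ 2 + ‖z‖ ^ 2) 1 ∂Kbar
      ≤ ∫ z, (4 * (1 - Real.sqrt (f z * (2 - f z))) + 2 * min (‖z‖ ^ 2) 1) ∂Kbar :=
        integral_mono_of_nonneg (ae_of_all _ fun z => le_min (by positivity) zero_le_one)
          ((hhell.const_mul 4).add (hnorm.const_mul 2)) (ae_of_all _ hpointwise)
    _ = 4 * ∫ z, (1 - Real.sqrt (f z * (2 - f z))) ∂Kbar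
        + 2 * ∫ z, min (‖z‖ ^ 2) 1 ∂Kbar := by
        rw [integral_add (hhell.const_mul 4) (hnorm.const_mul 2), integral_const_mul,
          integral_const_mul]

/-- Let `K₁`, `K₀` be finite measures on `ℝ^d`, `M = (1/2)·(K₁+K₀)`,
`f : ℝ^d → ℝ` measurable with `0 ≤ f ≤ 2`, `K₁ = M.withDensity f`,
`K₀ = M.withDensity (2 − f)`. Fix `p ∈ (0,1)`, set `K̄_p = p·K₁ + (1−p)·K₀` and
`j_p z = p·f z/(p·f z + (1−p)·(2−f z)) − p`. Then
`∫ min(j_p z² + ‖z‖², 1) dK̄_p ≤ 4·∫ (1 − √(f(2−f))) dK̄_p + 2·∫ min(‖z‖², 1) dK̄_p`. -/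
theorem stmt9 {d : ℕ}
    (K₁ K₀ : Measure (Fin d → ℝ)) [IsFiniteMeasure K₁] [IsFiniteMeasure K₀]
    (M : Measure (Fin d → ℝ)) (hM : M = (1/2 : ℝ≥0∞) • (K₁ + K₀))
    (f : (Fin d → ℝ) → ℝ) (hf : Measurable f)
    (hf0 : ∀ z, 0 ≤ f z) (hf2 : ∀ z, f z ≤ 2)
    (hK₁ : K₁ = M.withDensity (fun z => ENNReal.ofReal (f z)))
    (hK₀ : K₀ = M.withDensity (fun z => ENNReal.ofReal (2 - f z)))
    (p : ℝ) (hp0 : 0 < p) (hp1 : p < 1)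
    (Kbar : Measure (Fin d → ℝ))
    (hKbar : Kbar = ENNReal.ofReal p • K₁ + ENNReal.ofReal (1 - p) • K₀)
    (j : (Fin d → ℝ) → ℝ)
    (hj : ∀ z, j z = p * f z / (p * f z + (1 - p) * (2 - f z)) - p) :
    ∫ z, min (j z ^ 2 + ‖z‖ ^ 2) 1 ∂Kbar
      ≤ 4 * ∫ z, (1 - Real.sqrt (f z * (2 - f z))) ∂Kbar
        + 2 * ∫ z, min (‖z‖ ^ 2) 1 ∂Kbar :=
  stmt9_general K₁ K₀ f hf hf0 hf2 p hp0 hp1 Kbar hKbar j hj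
end

section
/- Let E be a complete separable metric space, let (μ_n) be a sequence of finite Borel measures on E converging weakly to a finite Borel measure μ, let A be a topological space, let (a_n) be a sequence in A converging to a ∈ A, and let g : A × E → ℝ be a bounded continuous function. Then ∫ g(a_n, z) dμ_n(z) converges to ∫ g(a, z) dμ(z) as n → ∞. -/
/-!
Extend the sequence `aₙ → a` to a continuous map `â` on the one-point compactification
`ℕ ∪ {∞}`, a second-countable metrizable space. Then `∫ g(aₙ, z) dμₙ(z)` is the integral of the
bounded continuous function `(p, z) ↦ g(â p, z)` against `δₙ ⊗ μₙ`, and products of weakly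
convergent probability measures on second-countable metrizable spaces converge weakly.
Finite measures reduce to probability measures by normalizing; when the limit has zero mass the
integrals are at most `‖g‖` times a vanishing mass.
-/

open MeasureTheory Filter Topology TopologicalSpace
open scoped BoundedContinuousFunction

namespace MeasureTheory

theorem integral_dirac_prod {α β : Type*} [MeasurableSpace α] [MeasurableSpace β] (x : α)
    (ν : Measure β) [SFinite ν] {f : α × β → ℝ} (hf : StronglyMeasurable f) :
    ∫ p, f p ∂(Measure.dirac x).prod ν = ∫ y, f (x, y) ∂ν := by
  rw [Measure.dirac_prod, integral_map_of_stronglyMeasurable measurable_prodMk_left hf]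

theorem FiniteMeasure.integral_eq_mass_mul_integral_normalize {E : Type*} [MeasurableSpace E]
    [Nonempty E] (μ : FiniteMeasure E) (f : E → ℝ) :
    ∫ z, f z ∂(μ : Measure E) = μ.mass * ∫ z, f z ∂(μ.normalize : Measure E) := by
  conv_lhs => rw [μ.self_eq_mass_smul_normalize, FiniteMeasure.toMeasure_smul]
  rw [integral_smul_nnreal_measure]
  rfl

variable {ι X E : Type*} {L : Filter ι}
  [TopologicalSpace X] [SecondCountableTopology X] [PseudoMetrizableSpace X]
  [MeasurableSpace X] [OpensMeasurableSpace X]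
  [TopologicalSpace E] [SecondCountableTopology E] [PseudoMetrizableSpace E]
  [MeasurableSpace E] [OpensMeasurableSpace E]

theorem ProbabilityMeasure.tendsto_integral_prodMk_of_tendsto {ν : ι → ProbabilityMeasure E}
    {ν₀ : ProbabilityMeasure E} (hν : Tendsto ν L (𝓝 ν₀)) {x : ι → X} {x₀ : X}
    (hx : Tendsto x L (𝓝 x₀)) (G : X × E →ᵇ ℝ) :
    Tendsto (fun i ↦ ∫ z, G (x i, z) ∂(ν i : Measure E)) L
      (𝓝 (∫ z, G (x₀, z) ∂(ν₀ : Measure E))) := by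
  have hprod : Tendsto (fun i ↦ (diracProba (x i)).prod (ν i)) L
      (𝓝 ((diracProba x₀).prod ν₀)) :=
    (ProbabilityMeasure.continuous_prod.tendsto _).comp
      (((continuous_diracProba.tendsto x₀).comp hx).prodMk_nhds hν)
  have slice (y : X) (ν : ProbabilityMeasure E) :
      ∫ p, G p ∂((diracProba y).prod ν : Measure (X × E)) = ∫ z, G (y, z) ∂(ν : Measure E) :=
    integral_dirac_prod y _ G.continuous.stronglyMeasurable
  simpa only [slice] using ProbabilityMeasure.tendsto_iff_forall_integral_tendsto.mp hprod G

theorem FiniteMeasure.tendsto_integral_prodMk_of_tendsto {μ : ι → FiniteMeasure E}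
    {μ₀ : FiniteMeasure E} (hμ : Tendsto μ L (𝓝 μ₀)) {x : ι → X} {x₀ : X}
    (hx : Tendsto x L (𝓝 x₀)) (G : X × E →ᵇ ℝ) :
    Tendsto (fun i ↦ ∫ z, G (x i, z) ∂(μ i : Measure E)) L
      (𝓝 (∫ z, G (x₀, z) ∂(μ₀ : Measure E))) := by
  rcases isEmpty_or_nonempty E with hE | hE
  · simp only [integral_of_isEmpty, tendsto_const_nhds]
  simp only [FiniteMeasure.integral_eq_mass_mul_integral_normalize]
  have hmass : Tendsto (fun i ↦ ((μ i).mass : ℝ)) L (𝓝 μ₀.mass) :=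
    NNReal.tendsto_coe.mpr hμ.mass
  rcases eq_or_ne μ₀ 0 with rfl | hμ₀
  · rw [FiniteMeasure.zero_mass, NNReal.coe_zero, zero_mul]
    refine Tendsto.zero_mul_isBoundedUnder_le (by simpa using hmass) ?_
    exact isBoundedUnder_of ⟨‖G‖, fun i ↦ by
      simpa using norm_integral_le_of_norm_le_const (μ := ((μ i).normalize : Measure E))
        (ae_of_all _ fun z ↦ G.norm_coe_le_norm (x i, z))⟩
  exact hmass.mul (ProbabilityMeasure.tendsto_integral_prodMk_of_tendsto
    (FiniteMeasure.tendsto_normalize_of_tendsto hμ hμ₀) hx G)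

end MeasureTheory

theorem stmt13_general {E : Type*} [MetricSpace E]
    [TopologicalSpace.SeparableSpace E] [MeasurableSpace E] [BorelSpace E]
    {A : Type*} [TopologicalSpace A]
    (μ : ℕ → FiniteMeasure E) (μlim : FiniteMeasure E)
    (hμ : Tendsto μ atTop (nhds μlim))
    (a : ℕ → A) (alim : A) (ha : Tendsto a atTop (nhds alim))
    (g : A × E → ℝ) (hgc : Continuous g) (hgb : ∃ C, ∀ x, |g x| ≤ C) :
    Tendsto (fun n => ∫ z, g (a n, z) ∂(μ n : Measure E)) atTop
      (nhds (∫ z, g (alim, z) ∂(μlim : Measure E))) := by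
  let _ : MeasurableSpace (OnePoint ℕ) := borel _
  have _ : BorelSpace (OnePoint ℕ) := ⟨rfl⟩
  let â : C(OnePoint ℕ, A) := OnePoint.continuousMapMkNat a alim ha
  obtain ⟨C, hC⟩ := hgb
  let G : OnePoint ℕ × E →ᵇ ℝ := .ofNormedAddCommGroup (fun p ↦ g (â p.1, p.2))
    (by fun_prop) C fun p ↦ hC _
  exact FiniteMeasure.tendsto_integral_prodMk_of_tendsto hμ
    ((OnePoint.continuous_iff_from_nat id).mp continuous_id) G

/-- Let `E` be a complete separable metric space, `(μ_n)` a sequence of finite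
Borel measures on `E` converging weakly to a finite Borel measure `μ`, `A` a topological
space, `(a_n)` a sequence in `A` converging to `a`, and `g : A × E → ℝ` a bounded continuous
function. Then `∫ g(a_n, z) dμ_n(z) → ∫ g(a, z) dμ(z)`. -/
theorem stmt13 {E : Type*} [MetricSpace E] [CompleteSpace E]
    [TopologicalSpace.SeparableSpace E] [MeasurableSpace E] [BorelSpace E]
    {A : Type*} [TopologicalSpace A]
    (μ : ℕ → FiniteMeasure E) (μlim : FiniteMeasure E)
    (hμ : Tendsto μ atTop (nhds μlim))
    (a : ℕ → A) (alim : A) (ha : Tendsto a atTop (nhds alim))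
    (g : A × E → ℝ) (hgc : Continuous g) (hgb : ∃ C, ∀ x, |g x| ≤ C) :
    Tendsto (fun n => ∫ z, g (a n, z) ∂(μ n : Measure E)) atTop
      (nhds (∫ z, g (alim, z) ∂(μlim : Measure E))) :=
  stmt13_general μ μlim hμ a alim ha g hgc hgb
end
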